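/- arXiv:1507.00773 — 4 statements merged into one kernel-verified Lean document; each statement's English description precedes it below -/
import Mathlib

section
/- Feasibility transfer for the committed reduction (single server): Let S be a finite set of jobs, ω ∈ (0,1), and for each j ∈ S let d̃_j = d_j - ω(d_j - a_j). Suppose there exists a feasible single-server schedule of S in which each job j receives D_j/ω units of processing within [a_j, d̃_j] (at most one job processed at any time). Then there exists a feasible single-server schedule in which each job j receives D_j units of processing within [d̃_j, d_j]. -/
/-!
By the Hall-type criterion for preemptive single-server scheduling, jobs with windows
`[r j, q j]` and demands `c j` can be scheduled iff every interval `[u, v]` is at least as long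
as the total demand of the jobs whose windows it contains. The old schedule gives this
criterion for the windows `[a j, d̃ j]` and demands `D j / ω`, and it transfers to the windows
`[d̃ j, d j]` and demands `D j`: a committed window inside `[u, v]` comes from an original window
inside `[u', v]`, where `u = ω u' + (1 - ω) v`, and `[u, v]` is exactly `ω` times as long.

Sufficiency of the criterion: schedule the jobs by increasing deadline, each in the leftmost free
part of its window. The schedule never idles while a released job is unfinished, so after the
last idle instant before the release of the next job, the machine only serves jobs released in
that busy period; Hall's condition on that period leaves room for the new job.
-/

open MeasureTheory Set

theorem volume_inter_Iic_le_add (A : Set ℝ) (x y : ℝ) :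
    volume (A ∩ Iic x) ≤ volume (A ∩ Iic y) + ENNReal.ofReal (dist x y) :=
  calc volume (A ∩ Iic x) ≤ volume (A ∩ Iic y ∪ Ioc y x) := by
        refine measure_mono fun t ⟨htA, htx⟩ => ?_
        by_cases hty : t ≤ y
        · exact Or.inl ⟨htA, hty⟩
        · exact Or.inr ⟨not_le.1 hty, htx⟩
    _ ≤ volume (A ∩ Iic y) + volume (Ioc y x) := measure_union_le _ _
    _ ≤ volume (A ∩ Iic y) + ENNReal.ofReal (dist x y) := by
        rw [Real.volume_Ioc, Real.dist_eq]
        gcongr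
        exact le_abs_self _

theorem lipschitzWith_toReal_volume_inter_Iic {A : Set ℝ} (hA : volume A ≠ ⊤) :
    LipschitzWith 1 fun x => (volume (A ∩ Iic x)).toReal := by
  have hfin : ∀ x, volume (A ∩ Iic x) ≠ ⊤ := fun x =>
    measure_ne_top_of_subset inter_subset_left hA
  refine LipschitzWith.of_le_add fun x y => ?_
  have h := ENNReal.toReal_mono (ENNReal.add_ne_top.2 ⟨hfin y, ENNReal.ofReal_ne_top⟩)
    (volume_inter_Iic_le_add A x y)
  rwa [ENNReal.toReal_add (hfin y) ENNReal.ofReal_ne_top, ENNReal.toReal_ofReal dist_nonneg] at h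

theorem exists_volume_inter_Iic_eq {A : Set ℝ} {a b c : ℝ} (hab : a ≤ b) (hA : A ⊆ Icc a b)
    (hc : 0 ≤ c) (hcA : ENNReal.ofReal c ≤ volume A) :
    ∃ e, volume (A ∩ Iic e) = ENNReal.ofReal c := by
  have hAfin : volume A ≠ ⊤ := measure_ne_top_of_subset hA (by simp [Real.volume_Icc])
  set f : ℝ → ℝ := fun x => (volume (A ∩ Iic x)).toReal
  have hfa : f a = 0 := by
    have h : A ∩ Iic a ⊆ {a} := fun x hx => le_antisymm hx.2 (hA hx.1).1
    simp [f, measure_mono_null h (measure_singleton a)]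
  have hfb : f b = (volume A).toReal := by
    simp only [f, inter_eq_left.2 (hA.trans Icc_subset_Iic_self)]
  have hcf : c ∈ Icc (f a) (f b) := by
    rw [hfa, hfb]
    exact ⟨hc, (ENNReal.ofReal_le_iff_le_toReal hAfin).1 hcA⟩
  obtain ⟨e, -, hfe⟩ := intermediate_value_Icc hab
    (lipschitzWith_toReal_volume_inter_Iic hAfin).continuous.continuousOn hcf
  exact ⟨e, by rw [← hfe, ENNReal.ofReal_toReal (measure_ne_top_of_subset inter_subset_left hAfin)]⟩

section Scheduling

variable {J : Type*} {s : Finset J} {r q c : J → ℝ} {T : J → Set ℝ}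

structure IsSchedule (s : Finset J) (r q c : J → ℝ) (T : J → Set ℝ) : Prop where
  measurableSet : ∀ j ∈ s, MeasurableSet (T j)
  subset_Icc : ∀ j ∈ s, T j ⊆ Icc (r j) (q j)
  volume_eq : ∀ j ∈ s, volume (T j) = ENNReal.ofReal (c j)
  pairwiseDisjoint : (s : Set J).PairwiseDisjoint T

def IsNonIdling (s : Finset J) (r : J → ℝ) (T : J → Set ℝ) : Prop :=
  ∀ t, (∀ j ∈ s, t ∉ T j) → ∀ j ∈ s, r j ≤ t → ∀ x ∈ T j, x ≤ t

def HallCondition [Fintype J] (r q c : J → ℝ) : Prop :=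
  ∀ u v, u ≤ v → ∑ j ∈ Finset.univ.filter (fun j => u ≤ r j ∧ q j ≤ v), c j ≤ v - u

theorem IsSchedule.hallCondition [Fintype J] (hT : IsSchedule Finset.univ r q c T)
    (hc : ∀ j, 0 ≤ c j) : HallCondition r q c := by
  intro u v huv
  set F := Finset.univ.filter fun j => u ≤ r j ∧ q j ≤ v
  have hvol : ENNReal.ofReal (∑ j ∈ F, c j) = volume (⋃ j ∈ F, T j) := by
    rw [ENNReal.ofReal_sum_of_nonneg fun j _ => hc j, measure_biUnion_finset
      (hT.pairwiseDisjoint.subset (by simp)) fun j _ => hT.measurableSet j (Finset.mem_univ j)]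
    exact Finset.sum_congr rfl fun j _ => (hT.volume_eq j (Finset.mem_univ j)).symm
  have hsub : ⋃ j ∈ F, T j ⊆ Icc u v := iUnion₂_subset fun j hj => by
    obtain ⟨-, hu, hv⟩ := Finset.mem_filter.1 hj
    exact (hT.subset_Icc j (Finset.mem_univ j)).trans (Icc_subset_Icc hu hv)
  have h := hvol.trans_le ((measure_mono hsub).trans_eq Real.volume_Icc)
  exact (ENNReal.ofReal_le_ofReal_iff (sub_nonneg.2 huv)).1 h

theorem HallCondition.committed [Fintype J] {a d : J → ℝ} {ω : ℝ} (hω0 : 0 < ω) (hω1 : ω ≤ 1)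
    (had : ∀ j, a j ≤ d j) (hc : ∀ j, 0 ≤ c j)
    (h : HallCondition a (fun j => d j - ω * (d j - a j)) fun j => c j / ω) :
    HallCondition (fun j => d j - ω * (d j - a j)) d c := by
  intro u v huv
  set u' := (u - (1 - ω) * v) / ω
  have hu' : ω * u' = u - (1 - ω) * v := mul_div_cancel₀ _ hω0.ne'
  have hu'v : u' ≤ v := le_of_mul_le_mul_left (by linarith) hω0
  have hF : Finset.univ.filter (fun j => u ≤ d j - ω * (d j - a j) ∧ d j ≤ v) ⊆
      Finset.univ.filter (fun j => u' ≤ a j ∧ d j - ω * (d j - a j) ≤ v) := by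
    intro j hj
    simp only [Finset.mem_filter, Finset.mem_univ, true_and] at hj ⊢
    obtain ⟨hu, hv⟩ := hj
    refine ⟨le_of_mul_le_mul_left ?_ hω0, ?_⟩
    · nlinarith [mul_nonneg (sub_nonneg.2 hω1) (sub_nonneg.2 hv)]
    · nlinarith [mul_nonneg hω0.le (sub_nonneg.2 (had j))]
  calc ∑ j ∈ Finset.univ.filter (fun j => u ≤ d j - ω * (d j - a j) ∧ d j ≤ v), c j
      = ω * ∑ j ∈ Finset.univ.filter (fun j => u ≤ d j - ω * (d j - a j) ∧ d j ≤ v), c j / ω := by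
        rw [Finset.mul_sum]
        exact Finset.sum_congr rfl fun j _ => (mul_div_cancel₀ _ hω0.ne').symm
    _ ≤ ω * (v - u') := by
        gcongr
        exact (Finset.sum_le_sum_of_subset_of_nonneg hF fun j _ _ =>
          div_nonneg (hc j) hω0.le).trans (h u' v hu'v)
    _ = v - u := by rw [mul_sub, hu']; ring

theorem IsNonIdling.exists_busy_period (hidle : IsNonIdling s r T)
    (hT : IsSchedule s r q c T) (t₁ : ℝ) :
    ∃ t₀ ≤ t₁, (∀ t ∈ Ioc t₀ t₁, ∃ j ∈ s, t ∈ T j) ∧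
      ∀ j ∈ s, ∀ x ∈ T j, t₀ < x → t₀ ≤ r j := by
  set E := {t | t ≤ t₁ ∧ ∀ j ∈ s, t ∉ T j}
  obtain ⟨m, hm⟩ : BddBelow (r '' s) := (s.finite_toSet.image r).bddBelow
  have hE : min (m - 1) t₁ ∈ E := by
    refine ⟨min_le_right _ _, fun j hj hx => ?_⟩
    have h1 := (hT.subset_Icc j hj hx).1
    have h2 := hm (mem_image_of_mem r hj)
    linarith [min_le_left (m - 1) t₁]
  have hEbdd : BddAbove E := ⟨t₁, fun t ht => ht.1⟩
  refine ⟨sSup E, csSup_le ⟨_, hE⟩ fun t ht => ht.1, fun t ht => ?_, fun j hj x hx hlt => ?_⟩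
  · by_contra! h
    exact (le_csSup hEbdd ⟨ht.2, h⟩).not_gt ht.1
  · by_contra! hrj
    obtain ⟨t, htE, hrt⟩ := exists_lt_of_lt_csSup ⟨_, hE⟩ hrj
    exact (hidle t htE.2 j hj hrt.le x hx).not_gt ((le_csSup hEbdd htE).trans_lt hlt)

theorem IsSchedule.ofReal_le_volume_diff [Fintype J] (hT : IsSchedule s r q c T)
    (hidle : IsNonIdling s r T) (hall : HallCondition r q c) (hc : ∀ j, 0 ≤ c j) {j₀ : J}
    (hj₀ : j₀ ∉ s) (hrq : r j₀ ≤ q j₀) (hmax : ∀ j ∈ s, q j ≤ q j₀) :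
    ENNReal.ofReal (c j₀) ≤ volume (Icc (r j₀) (q j₀) \ ⋃ j ∈ s, T j) := by
  classical
  obtain ⟨t₀, ht₀, hbusy, hlate⟩ := hidle.exists_busy_period hT (r j₀)
  set A := Icc (r j₀) (q j₀) \ ⋃ j ∈ s, T j
  set S := s.filter fun j => t₀ ≤ r j
  have hcover : Ioc t₀ (q j₀) ⊆ (⋃ j ∈ S, T j) ∪ A := by
    intro t ht
    by_cases htU : ∃ j ∈ s, t ∈ T j
    · obtain ⟨j, hj, htj⟩ := htU
      exact Or.inl (mem_iUnion₂.2 ⟨j, Finset.mem_filter.2 ⟨hj, hlate j hj t htj ht.1⟩, htj⟩)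
    · refine Or.inr ⟨⟨?_, ht.2⟩, by simpa using htU⟩
      by_contra! h
      exact htU (hbusy t ⟨ht.1, h.le⟩)
  have hS : volume (⋃ j ∈ S, T j) ≤ ENNReal.ofReal (∑ j ∈ S, c j) := by
    rw [ENNReal.ofReal_sum_of_nonneg fun j _ => hc j]
    exact (measure_biUnion_finset_le _ _).trans
      (Finset.sum_le_sum fun j hj => (hT.volume_eq j (Finset.mem_filter.1 hj).1).le)
  have hhall : c j₀ + ∑ j ∈ S, c j ≤ q j₀ - t₀ := by
    have hsub : insert j₀ S ⊆ Finset.univ.filter fun j => t₀ ≤ r j ∧ q j ≤ q j₀ := by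
      intro j hj
      rcases Finset.mem_insert.1 hj with rfl | hj
      · simp [ht₀]
      · obtain ⟨hjs, hrj⟩ := Finset.mem_filter.1 hj
        simp [hrj, hmax j hjs]
    rw [← Finset.sum_insert fun h => hj₀ (Finset.mem_filter.1 h).1]
    exact (Finset.sum_le_sum_of_subset_of_nonneg hsub fun j _ _ => hc j).trans
      (hall _ _ (ht₀.trans hrq))
  refine (ENNReal.add_le_add_iff_left (ENNReal.ofReal_ne_top (r := ∑ j ∈ S, c j))).1 ?_
  calc ENNReal.ofReal (∑ j ∈ S, c j) + ENNReal.ofReal (c j₀)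
      = ENNReal.ofReal (c j₀ + ∑ j ∈ S, c j) := by
        rw [add_comm, ENNReal.ofReal_add (hc j₀) (Finset.sum_nonneg fun j _ => hc j)]
    _ ≤ ENNReal.ofReal (q j₀ - t₀) := ENNReal.ofReal_le_ofReal hhall
    _ = volume (Ioc t₀ (q j₀)) := Real.volume_Ioc.symm
    _ ≤ volume (⋃ j ∈ S, T j) + volume A := (measure_mono hcover).trans (measure_union_le _ _)
    _ ≤ ENNReal.ofReal (∑ j ∈ S, c j) + volume A := by gcongr

theorem IsSchedule.insert [DecidableEq J] (hT : IsSchedule s r q c T) {j₀ : J} (hj₀ : j₀ ∉ s)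
    {P : Set ℝ} (hPm : MeasurableSet P) (hPsub : P ⊆ Icc (r j₀) (q j₀))
    (hPvol : volume P = ENNReal.ofReal (c j₀)) (hPdisj : ∀ j ∈ s, Disjoint P (T j)) :
    IsSchedule (insert j₀ s) r q c (Function.update T j₀ P) := by
  have hupd : ∀ j ∈ s, Function.update T j₀ P j = T j := fun j hj =>
    Function.update_of_ne (ne_of_mem_of_not_mem hj hj₀) _ _
  refine ⟨fun j hj => ?_, fun j hj => ?_, fun j hj => ?_, ?_⟩
  · rcases Finset.mem_insert.1 hj with rfl | hj
    · simpa using hPm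
    · simpa [hupd j hj] using hT.measurableSet j hj
  · rcases Finset.mem_insert.1 hj with rfl | hj
    · simpa using hPsub
    · simpa [hupd j hj] using hT.subset_Icc j hj
  · rcases Finset.mem_insert.1 hj with rfl | hj
    · simpa using hPvol
    · simpa [hupd j hj] using hT.volume_eq j hj
  · rw [Finset.coe_insert]
    refine (hT.pairwiseDisjoint.mono_on fun j hj => (hupd j hj).le).insert_of_notMem hj₀
      fun j hj => ?_
    simpa [hupd j hj] using hPdisj j hj

theorem IsNonIdling.insert [DecidableEq J] (hidle : IsNonIdling s r T) {j₀ : J} (hj₀ : j₀ ∉ s)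
    {P : Set ℝ} (hP : ∀ t, (∀ j ∈ s, t ∉ T j) → r j₀ ≤ t → t ∉ P → ∀ x ∈ P, x ≤ t) :
    IsNonIdling (insert j₀ s) r (Function.update T j₀ P) := by
  have hupd : ∀ j ∈ s, Function.update T j₀ P j = T j := fun j hj =>
    Function.update_of_ne (ne_of_mem_of_not_mem hj hj₀) _ _
  intro t ht j hj hrt x hx
  have hts : ∀ j ∈ s, t ∉ T j := fun j hj => hupd j hj ▸ ht j (Finset.mem_insert_of_mem hj)
  rcases Finset.mem_insert.1 hj with rfl | hj
  · simp only [Function.update_self] at hx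
    exact hP t hts hrt (by simpa using ht j (Finset.mem_insert_self j s)) x hx
  · rw [hupd j hj] at hx
    exact hidle t hts j hj hrt x hx

theorem exists_isSchedule_isNonIdling [Fintype J] (hall : HallCondition r q c)
    (hc : ∀ j, 0 ≤ c j) (hrq : ∀ j, r j ≤ q j) (s : Finset J) :
    ∃ T, IsSchedule s r q c T ∧ IsNonIdling s r T := by
  classical
  induction s using Finset.induction_on_max_value q with
  | empty => exact ⟨fun _ => ∅, ⟨by simp, by simp, by simp, by simp⟩, by simp [IsNonIdling]⟩
  | insert j₀ s hj₀ hmax ih =>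
    obtain ⟨T, hT, hidle⟩ := ih
    set A := Icc (r j₀) (q j₀) \ ⋃ j ∈ s, T j
    obtain ⟨e, he⟩ := exists_volume_inter_Iic_eq (hrq j₀) sdiff_subset (hc j₀)
      (hT.ofReal_le_volume_diff hidle hall hc hj₀ (hrq j₀) hmax)
    refine ⟨_, hT.insert hj₀ (P := A ∩ Iic e) ?_ (inter_subset_left.trans sdiff_subset) he ?_,
      hidle.insert hj₀ ?_⟩
    · exact (measurableSet_Icc.diff (s.measurableSet_biUnion hT.measurableSet)).inter
        measurableSet_Iic
    · exact fun j hj => disjoint_left.2 fun x hx hxT => hx.1.2 (mem_iUnion₂.2 ⟨j, hj, hxT⟩)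
    · intro t ht hrt htP x hx
      rcases le_or_gt t (q j₀) with htq | htq
      · exact hx.2.trans (le_of_not_ge fun hte => htP ⟨⟨⟨hrt, htq⟩, by simpa using ht⟩, hte⟩)
      · exact hx.1.1.2.trans htq.le

end Scheduling

/-- Feasibility transfer for the committed reduction (single server): if the jobs of `S`
can be feasibly scheduled with demands `D j / ω` inside the windows `[a j, d̃ j]`
(where `d̃ j = d j - ω (d j - a j)`), then they can be feasibly scheduled with
demands `D j` inside the windows `[d̃ j, d j]`. -/
theorem feasibility_transfer {J : Type*} [Fintype J]
    (D a d : J → ℝ) (ω : ℝ) (hω0 : 0 < ω) (hω1 : ω < 1)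
    (hD : ∀ j, 0 < D j) (had : ∀ j, a j < d j)
    (hfeas : ∃ T : J → Set ℝ,
      (∀ j, MeasurableSet (T j)) ∧
      (∀ j, T j ⊆ Set.Icc (a j) (d j - ω * (d j - a j))) ∧
      (∀ j, MeasureTheory.volume (T j) = ENNReal.ofReal (D j / ω)) ∧
      Pairwise (Function.onFun Disjoint T)) :
    ∃ T' : J → Set ℝ,
      (∀ j, MeasurableSet (T' j)) ∧
      (∀ j, T' j ⊆ Set.Icc (d j - ω * (d j - a j)) (d j)) ∧
      (∀ j, MeasureTheory.volume (T' j) = ENNReal.ofReal (D j)) ∧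
      Pairwise (Function.onFun Disjoint T') := by
  obtain ⟨T, hTm, hTsub, hTvol, hTdisj⟩ := hfeas
  have hold : IsSchedule Finset.univ a (fun j => d j - ω * (d j - a j)) (fun j => D j / ω) T :=
    ⟨fun j _ => hTm j, fun j _ => hTsub j, fun j _ => hTvol j,
      by rw [Finset.coe_univ]; exact pairwise_univ.2 hTdisj⟩
  have hall := (hold.hallCondition fun j => (div_pos (hD j) hω0).le).committed hω0 hω1.le
    (fun j => (had j).le) fun j => (hD j).le
  obtain ⟨T', hT', -⟩ := exists_isSchedule_isNonIdling hall (fun j => (hD j).le)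
    (fun j => sub_le_self _ (mul_nonneg hω0.le (sub_nonneg.2 (had j).le))) Finset.univ
  exact ⟨T', fun j => hT'.measurableSet j (Finset.mem_univ j),
    fun j => hT'.subset_Icc j (Finset.mem_univ j), fun j => hT'.volume_eq j (Finset.mem_univ j),
    pairwise_univ.1 (Finset.coe_univ (α := J) ▸ hT'.pairwiseDisjoint)⟩
end

section
/- In the proof of the feasibility transfer theorem: fix a job j, let t_R = d_j + ℓ_R for some ℓ_R ≥ 0, and let t_L = a_j - ℓ_R·(1-ω)/ω. If a job j' satisfies d̃_{j'} ≥ d̃_j and d_{j'} ≤ t_R (where d̃_x = d_x - ω(d_x - a_x)), then a_{j'} ≥ t_L. Moreover t_R - t_L = (t_R - d̃_j)/ω. -/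
/-- Key claim in the feasibility-transfer proof: with `t_R = d_j + ℓ_R` and
`t_L = a_j - ℓ_R (1-ω)/ω`, any job `j'` with virtual deadline at least that of `j`
and deadline at most `t_R` has arrival at least `t_L`; moreover
`t_R - t_L = (t_R - d̃_j)/ω`, where `d̃_x = d_x - ω(d_x - a_x)`. -/
theorem interval_containment_claim (ω aj dj aj' dj' ℓR : ℝ)
    (hω0 : 0 < ω) (hω1 : ω < 1) (hℓ : 0 ≤ ℓR)
    (haj : aj < dj) (haj' : aj' < dj')
    (hvd : dj - ω * (dj - aj) ≤ dj' - ω * (dj' - aj'))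
    (hdR : dj' ≤ dj + ℓR) :
    aj - ℓR * (1 - ω) / ω ≤ aj' ∧
    (dj + ℓR) - (aj - ℓR * (1 - ω) / ω) = ((dj + ℓR) - (dj - ω * (dj - aj))) / ω := by
  have hω : ω ≠ 0 := ne_of_gt hω0
  constructor
  · have h : (aj - ℓR * (1 - ω) / ω) * ω ≤ aj' * ω := by
      field_simp
      nlinarith
    exact le_of_mul_le_mul_right h hω0
  · field_simp
    ring
end

section
/- Coverage of maximal aligned intervals: Let a < d be reals, k a nonnegative integer, and suppose the collection C of maximal aligned intervals for window [a, d] and granularity k (intervals [u·2^m, (u+1)·2^m] with m ≥ k, u ∈ ℕ, contained in [a, d] together with their forward copy [end, end + length] ⊆ [a, d], maximal under set inclusion) is nonempty. Then the intervals in C are pairwise disjoint up to endpoints, their union is an interval I ⊆ [a, d], and |I| ≥ (d - a)/4. -/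
/-- An interval `[x, y]` is aligned for the window `[a, d]` with granularity floor `k` if
it lies in `[a, d]`, its forward copy `[y, 2y - x]` lies in `[a, d]`, and it is a dyadic
interval `[u·2^m, (u+1)·2^m]` with `u : ℕ` and `m ≥ k`. -/
def Aligned (a d : ℝ) (k : ℕ) (x y : ℝ) : Prop :=
  Set.Icc x y ⊆ Set.Icc a d ∧
  Set.Icc y (2 * y - x) ⊆ Set.Icc a d ∧
  ∃ u m : ℕ, k ≤ m ∧ x = (u : ℝ) * 2 ^ m ∧ y = ((u : ℝ) + 1) * 2 ^ m

/-- A maximal aligned interval (maximal under set inclusion among aligned intervals). -/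
def MaximalAligned (a d : ℝ) (k : ℕ) (x y : ℝ) : Prop :=
  Aligned a d k x y ∧
    ∀ x' y', Aligned a d k x' y' → Set.Icc x y ⊆ Set.Icc x' y' →
      Set.Icc x y = Set.Icc x' y'

/-!
Dyadic intervals are either nested or meet at most in an endpoint, so distinct maximal aligned
intervals have disjoint interiors. Put `s = ⌈a / 2^k⌉` and `t = ⌊d / 2^k⌋`. Every aligned
interval is a union of cells `[w·2^k, (w+1)·2^k]` with `s ≤ w ≤ t - 2`, and conversely each
such cell is itself aligned and so lies in a maximal aligned interval; hence the maximal
aligned intervals cover exactly `[s·2^k, (t-1)·2^k]`. An aligned interval exists only if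
`t - s ≥ 2`, and as `d - a < (t - s + 2)·2^k`, the length `(t - s - 1)·2^k` is at least
`(d - a)/4`.
-/

open Set

lemma aligned_iff {a d : ℝ} {k : ℕ} {x y : ℝ} :
    Aligned a d k x y ↔ ∃ u m : ℕ, k ≤ m ∧ x = u * 2 ^ m ∧ y = (u + 1) * 2 ^ m ∧
      a ≤ u * 2 ^ m ∧ (u + 2) * 2 ^ m ≤ d := by
  constructor
  · rintro ⟨hxy, hcopy, u, m, hkm, rfl, rfl⟩
    have hpow : (0 : ℝ) < 2 ^ m := by positivity
    refine ⟨u, m, hkm, rfl, rfl, (hxy (left_mem_Icc.2 (by nlinarith))).1, ?_⟩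
    linarith [(hcopy (right_mem_Icc.2 (by nlinarith))).2]
  · rintro ⟨u, m, hkm, rfl, rfl, hax, hd⟩
    have hpow : (0 : ℝ) < 2 ^ m := by positivity
    exact ⟨Icc_subset_Icc hax (by nlinarith), Icc_subset_Icc (by nlinarith) (by linarith),
      u, m, hkm, rfl, rfl⟩

lemma Icc_subset_Icc_of_Ioo_inter_nonempty_int {c : ℝ} (hc : 0 < c) {i p q : ℤ}
    (h : (Ioo (i * c) ((i + 1) * c) ∩ Ioo (p * c) (q * c)).Nonempty) :
    Icc (i * c) ((i + 1) * c) ⊆ Icc (p * c) (q * c) := by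
  obtain ⟨z, ⟨hiz, hzi⟩, hpz, hzq⟩ := h
  have hpi : (p : ℝ) ≤ i := by
    have : (p : ℝ) < i + 1 := (mul_lt_mul_iff_left₀ hc).1 (hpz.trans hzi)
    exact_mod_cast Int.lt_add_one_iff.1 (by exact_mod_cast this)
  have hiq : (i : ℝ) + 1 ≤ q := by
    have : (i : ℝ) < q := (mul_lt_mul_iff_left₀ hc).1 (hiz.trans hzq)
    exact_mod_cast Int.add_one_le_iff.2 (by exact_mod_cast this)
  exact Icc_subset_Icc (by gcongr) (by gcongr)

lemma dyadic_Icc_subset_of_Ioo_inter_nonempty {u u' m m' : ℕ} (hm : m ≤ m')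
    (h : (Ioo ((u : ℝ) * 2 ^ m) ((u + 1) * 2 ^ m) ∩
      Ioo ((u' : ℝ) * 2 ^ m') ((u' + 1) * 2 ^ m')).Nonempty) :
    Icc ((u : ℝ) * 2 ^ m) ((u + 1) * 2 ^ m) ⊆ Icc ((u' : ℝ) * 2 ^ m') ((u' + 1) * 2 ^ m') := by
  have hpow : (2 : ℝ) ^ m' = 2 ^ (m' - m) * 2 ^ m := by rw [← pow_add, Nat.sub_add_cancel hm]
  have key := Icc_subset_Icc_of_Ioo_inter_nonempty_int (c := 2 ^ m) (by positivity) (i := u)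
    (p := u' * 2 ^ (m' - m)) (q := (u' + 1) * 2 ^ (m' - m))
  push_cast at key
  rw [hpow, ← mul_assoc, ← mul_assoc] at h ⊢
  exact key h

lemma MaximalAligned.eq_of_Ioo_inter_nonempty {a d : ℝ} {k : ℕ} {x y x' y' : ℝ}
    (hM : MaximalAligned a d k x y) (hM' : MaximalAligned a d k x' y')
    (h : (Ioo x y ∩ Ioo x' y').Nonempty) : x = x' ∧ y = y' := by
  obtain ⟨u, m, -, rfl, rfl, -⟩ := aligned_iff.1 hM.1
  obtain ⟨u', m', -, rfl, rfl, -⟩ := aligned_iff.1 hM'.1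
  wlog hm : m ≤ m' generalizing u m u' m'
  · obtain ⟨hx, hy⟩ := this u' m' hM' u m hM (inter_comm _ _ ▸ h) (le_of_not_ge hm)
    exact ⟨hx.symm, hy.symm⟩
  have hlt : (u : ℝ) * 2 ^ m ≤ (u + 1) * 2 ^ m := by gcongr; linarith
  exact (Icc_eq_Icc_iff hlt).1 (hM.2 _ _ hM'.1 (dyadic_Icc_subset_of_Ioo_inter_nonempty hm h))

lemma Aligned.exists_maximalAligned_superset {a d : ℝ} {k : ℕ} {x y : ℝ}
    (h : Aligned a d k x y) : ∃ x' y', MaximalAligned a d k x' y' ∧ Icc x y ⊆ Icc x' y' := by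
  let S : Set ℕ := {m | ∃ u : ℕ, k ≤ m ∧ a ≤ u * 2 ^ m ∧ (u + 2) * 2 ^ m ≤ d ∧
    Icc x y ⊆ Icc ((u : ℝ) * 2 ^ m) ((u + 1) * 2 ^ m)}
  have hS : S.Nonempty := by
    obtain ⟨u, m, hkm, rfl, rfl, hax, hd⟩ := aligned_iff.1 h
    exact ⟨m, u, hkm, hax, hd, subset_rfl⟩
  have hbdd : BddAbove S := by
    refine ⟨⌊d⌋₊, ?_⟩
    rintro m ⟨u, -, -, hd, -⟩
    have hpow : (2 : ℝ) ^ m ≤ d := by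
      nlinarith [pow_pos (two_pos (α := ℝ)) m, u.cast_nonneg (α := ℝ)]
    exact (Nat.lt_two_pow_self).le.trans (Nat.le_floor (by exact_mod_cast hpow))
  obtain ⟨u, hk, hax, hd, hsub⟩ := Nat.sSup_mem hS hbdd
  set M := sSup S
  have hpow : (0 : ℝ) < 2 ^ M := by positivity
  refine ⟨_, _, ⟨aligned_iff.2 ⟨u, M, hk, rfl, rfl, hax, hd⟩, fun x' y' hA' hsub' => ?_⟩, hsub⟩
  obtain ⟨u', m', hk', rfl, rfl, hax', hd'⟩ := aligned_iff.1 hA'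
  have hm'M : m' ≤ M := le_csSup hbdd ⟨u', hk', hax', hd', hsub.trans hsub'⟩
  obtain ⟨hleft, hright⟩ := (Icc_subset_Icc_iff (by gcongr; linarith)).1 hsub'
  -- the larger interval is at least as long, so it has the same scale `M`
  have hMm' : M ≤ m' := by
    refine (pow_le_pow_iff_right₀ (one_lt_two (α := ℝ))).1 ?_
    linarith
  obtain rfl := le_antisymm hm'M hMm'
  congr 1 <;> linarith

lemma Aligned.exists_cell_bounds {a d : ℝ} {k : ℕ} {x y : ℝ} (h : Aligned a d k x y) :
    ∃ v e : ℕ, 0 < e ∧ x = v * 2 ^ k ∧ y = (v + e) * 2 ^ k ∧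
      ⌈a / 2 ^ k⌉₊ ≤ v ∧ v + 2 * e ≤ ⌊d / 2 ^ k⌋₊ := by
  obtain ⟨u, m, hkm, rfl, rfl, hax, hd⟩ := aligned_iff.1 h
  have hpow : (2 : ℝ) ^ m = 2 ^ (m - k) * 2 ^ k := by rw [← pow_add, Nat.sub_add_cancel hkm]
  have hk : (0 : ℝ) < 2 ^ k := by positivity
  refine ⟨u * 2 ^ (m - k), 2 ^ (m - k), by positivity, ?_, ?_, ?_, ?_⟩
  · push_cast; rw [hpow]; ring
  · push_cast; rw [hpow]; ring
  · refine Nat.ceil_le.2 ((div_le_iff₀ hk).2 ?_)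
    push_cast; rwa [hpow, ← mul_assoc] at hax
  · refine Nat.le_floor ((le_div_iff₀ hk).2 ?_)
    push_cast; rw [hpow] at hd; linarith

lemma Aligned.ceil_add_two_le_floor {a d : ℝ} {k : ℕ} {x y : ℝ} (h : Aligned a d k x y) :
    ⌈a / 2 ^ k⌉₊ + 2 ≤ ⌊d / 2 ^ k⌋₊ := by
  obtain ⟨v, e, he, -, -, hv, hve⟩ := h.exists_cell_bounds
  omega

lemma Aligned.Icc_subset {a d : ℝ} {k : ℕ} {x y : ℝ} (h : Aligned a d k x y) :
    Icc x y ⊆ Icc (⌈a / 2 ^ k⌉₊ * 2 ^ k) ((⌊d / 2 ^ k⌋₊ - 1 : ℝ) * 2 ^ k) := by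
  obtain ⟨v, e, he, rfl, rfl, hv, hve⟩ := h.exists_cell_bounds
  have hv' : (⌈a / 2 ^ k⌉₊ : ℝ) ≤ v := by exact_mod_cast hv
  have hve' : (v : ℝ) + 2 * e ≤ ⌊d / 2 ^ k⌋₊ := by exact_mod_cast hve
  have he' : (1 : ℝ) ≤ e := by exact_mod_cast he
  exact Icc_subset_Icc (by gcongr) (by gcongr; linarith)

lemma exists_nat_mem_Icc_mul_of_mem_Icc {c z : ℝ} (hc : 0 < c) {s n : ℕ} (hsn : s < n)
    (hz : z ∈ Icc (s * c) (n * c)) :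
    ∃ w : ℕ, s ≤ w ∧ w < n ∧ z ∈ Icc (w * c) ((w + 1) * c) := by
  obtain ⟨hsz, hzn⟩ := hz
  rcases hzn.lt_or_eq with hlt | rfl
  · have hz : 0 ≤ z / c := div_nonneg (hsz.trans' (by positivity)) hc.le
    refine ⟨⌊z / c⌋₊, Nat.le_floor ((le_div_iff₀ hc).2 hsz),
      (Nat.floor_lt hz).2 ((div_lt_iff₀ hc).2 hlt), ?_, ?_⟩
    · exact (le_div_iff₀ hc).1 (Nat.floor_le hz)
    · exact ((div_lt_iff₀ hc).1 (Nat.lt_floor_add_one _)).le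
  · have hn : ((n - 1 : ℕ) : ℝ) + 1 = n := by exact_mod_cast Nat.sub_add_cancel (by omega)
    refine ⟨n - 1, by omega, by omega, ?_, by rw [hn]⟩
    gcongr
    omega

lemma iUnion_maximalAligned_eq_Icc {a d : ℝ} {k : ℕ} (hst : ⌈a / 2 ^ k⌉₊ + 2 ≤ ⌊d / 2 ^ k⌋₊) :
    (⋃ (xy : ℝ × ℝ) (_ : MaximalAligned a d k xy.1 xy.2), Icc xy.1 xy.2) =
      Icc ((⌈a / 2 ^ k⌉₊ : ℝ) * 2 ^ k) ((⌊d / 2 ^ k⌋₊ - 1 : ℝ) * 2 ^ k) := by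
  refine Subset.antisymm (iUnion₂_subset fun xy hM => hM.1.Icc_subset) fun z hz => ?_
  have hk : (0 : ℝ) < 2 ^ k := by positivity
  rw [← Nat.cast_pred (by omega)] at hz
  obtain ⟨w, hsw, hwt, hzw⟩ := exists_nat_mem_Icc_mul_of_mem_Icc hk (by omega) hz
  have hax : a ≤ w * 2 ^ k := by
    refine ((div_le_iff₀ hk).1 (Nat.le_ceil _)).trans ?_
    gcongr
  have hwd : (w + 2 : ℝ) * 2 ^ k ≤ d := by
    have hd : 0 ≤ d / 2 ^ k := zero_le_one.trans (Nat.floor_pos.1 (by omega))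
    refine le_trans ?_ ((le_div_iff₀ hk).1 (Nat.floor_le hd))
    gcongr
    exact_mod_cast (show w + 2 ≤ ⌊d / 2 ^ k⌋₊ by omega)
  obtain ⟨x, y, hM, hsub⟩ :=
    (aligned_iff.2 ⟨w, k, le_rfl, rfl, rfl, hax, hwd⟩).exists_maximalAligned_superset
  exact mem_iUnion₂.2 ⟨(x, y), hM, hsub hzw⟩

lemma div_four_le_floor_sub_ceil_mul {a d g : ℝ} (ha : 0 ≤ a) (hg : 0 < g)
    (hst : ⌈a / g⌉₊ + 2 ≤ ⌊d / g⌋₊) :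
    (d - a) / 4 ≤ (⌊d / g⌋₊ - 1 : ℝ) * g - ⌈a / g⌉₊ * g := by
  have hd : d < (⌊d / g⌋₊ + 1) * g := (div_lt_iff₀ hg).1 (Nat.lt_floor_add_one _)
  have ha' : (⌈a / g⌉₊ - 1) * g < a :=
    (lt_div_iff₀ hg).1 (by linarith [Nat.ceil_lt_add_one (div_nonneg ha hg.le)])
  have hst' : (⌈a / g⌉₊ + 2 : ℝ) ≤ ⌊d / g⌋₊ := by exact_mod_cast hst
  calc (d - a) / 4 ≤ (⌊d / g⌋₊ - ⌈a / g⌉₊ + 2) * g / 4 := by linarith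
    _ ≤ (⌊d / g⌋₊ - 1 : ℝ) * g - ⌈a / g⌉₊ * g := by nlinarith

theorem maximal_aligned_coverage_general (a d : ℝ) (k : ℕ)
    (ha : 0 ≤ a)
    (hne : ∃ x y, MaximalAligned a d k x y) :
    (∀ x y x' y', MaximalAligned a d k x y → MaximalAligned a d k x' y' →
      (x, y) ≠ (x', y') → Set.Ioo x y ∩ Set.Ioo x' y' = ∅) ∧
    (∃ p q : ℝ, p ≤ q ∧
      (⋃ (xy : ℝ × ℝ) (_ : MaximalAligned a d k xy.1 xy.2), Set.Icc xy.1 xy.2)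
        = Set.Icc p q ∧
      Set.Icc p q ⊆ Set.Icc a d ∧
      (d - a) / 4 ≤ q - p) := by
  obtain ⟨x₀, y₀, hM₀⟩ := hne
  have hst := hM₀.1.ceil_add_two_le_floor
  have hunion := iUnion_maximalAligned_eq_Icc hst
  refine ⟨fun x y x' y' hM hM' hxy => ?_, _, _, ?_, hunion, ?_,
    div_four_le_floor_sub_ceil_mul ha (by positivity) hst⟩
  · by_contra hmeet
    exact hxy (Prod.ext_iff.2 (hM.eq_of_Ioo_inter_nonempty hM' (nonempty_iff_ne_empty.2 hmeet)))
  · have hst' : (⌈a / 2 ^ k⌉₊ + 2 : ℝ) ≤ ⌊d / 2 ^ k⌋₊ := by exact_mod_cast hst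
    gcongr
    linarith
  · exact hunion ▸ iUnion₂_subset fun xy hM => hM.1.1

/-- Coverage of maximal aligned intervals: if the family of maximal aligned intervals for
window `[a, d]` (with `0 ≤ a < d`) and granularity `k` is nonempty, then these intervals
are pairwise disjoint up to endpoints, and their union is an interval `I ⊆ [a, d]` of
length at least `(d - a)/4`. -/
theorem maximal_aligned_coverage (a d : ℝ) (k : ℕ)
    (ha : 0 ≤ a) (had : a < d)
    (hne : ∃ x y, MaximalAligned a d k x y) :
    (∀ x y x' y', MaximalAligned a d k x y → MaximalAligned a d k x' y' →
      (x, y) ≠ (x', y') → Set.Ioo x y ∩ Set.Ioo x' y' = ∅) ∧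
    (∃ p q : ℝ, p ≤ q ∧
      (⋃ (xy : ℝ × ℝ) (_ : MaximalAligned a d k xy.1 xy.2), Set.Icc xy.1 xy.2)
        = Set.Icc p q ∧
      Set.Icc p q ⊆ Set.Icc a d ∧
      (d - a) / 4 ≤ q - p) :=
  maximal_aligned_coverage_general a d k ha hne
end

section
/- Adversarial demand recurrence: Define t_0 = 0, and for n ≥ 1 let D_n = (s - t_{n-1})/s and suppose a work-preserving natural scheduler admits job n at time t_n ≥ t_{n-1} + D_{n-1} (with D_0 = 1, all jobs sharing deadline s). Setting Δ_n = s - t_n, the inequality Δ_{n+1} ≤ Δ_n - (Δ_{n-1})/s holds for all n ≥ 1. If 0 < s < 4 and Δ_n > 0 for all n, then the ratios y_n = Δ_{n-1}/Δ_n satisfy y_n ≤ s for all n while y_n/y_{n-1} ≥ 4/s > 1, a contradiction; hence some Δ_n ≤ 0 and the scheduler cannot meet all commitments. -/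
/-- Adversarial demand recurrence: with `t 0 = 0`, first demand `1`, demands
`D n = (s - t (n-1))/s`, and admission times satisfying `t (n+1) ≥ t n + D n`, the
free times `Δ n = s - t n` satisfy `Δ (n+2) ≤ Δ (n+1) - Δ n / s`; and if `0 < s < 4`,
some `Δ n` must be nonpositive, so the scheduler cannot meet all commitments. -/
theorem adversarial_recurrence (s : ℝ) (t : ℕ → ℝ)
    (hs0 : 0 < s) (hs4 : s < 4)
    (ht0 : t 0 = 0) (ht1 : t 0 + 1 ≤ t 1)
    (hrec : ∀ n : ℕ, t (n + 1) + (s - t n) / s ≤ t (n + 2)) :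
    (∀ n : ℕ, s - t (n + 2) ≤ (s - t (n + 1)) - (s - t n) / s) ∧
    (∃ n : ℕ, s - t n ≤ 0) := by
  have hpart1 : ∀ n : ℕ, s - t (n + 2) ≤ (s - t (n + 1)) - (s - t n) / s := by
    intro n; have := hrec n; linarith
  refine ⟨hpart1, ?_⟩
  by_contra hcon
  push_neg at hcon
  -- hcon : ∀ n, 0 < s - t n
  have hpos : ∀ n : ℕ, 0 < s - t n := hcon
  -- the ratio sequence
  have hylt : ∀ n : ℕ, (s - t n) / (s - t (n + 1)) < s := by
    intro n
    have h1 : (s - t n) / s < s - t (n + 1) := by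
      have h2 := hpart1 n; have h3 := hpos (n + 2); linarith
    have h4 : s - t n < s * (s - t (n + 1)) := by
      rw [div_lt_iff₀ hs0] at h1; linarith
    exact (div_lt_iff₀ (hpos (n + 1))).2 (by linarith)
  have hystep : ∀ n : ℕ,
      4 / s * ((s - t n) / (s - t (n + 1))) ≤ (s - t (n + 1)) / (s - t (n + 2)) := by
    intro n
    have ha := hpos n
    have hb := hpos (n + 1)
    have hc := hpos (n + 2)
    have hrec' := hpart1 n
    have hcancel : s * ((s - t n) / s) = s - t n := mul_div_cancel₀ _ hs0.ne'
    have hrs : s * (s - t (n + 2)) ≤ s * (s - t (n + 1)) - (s - t n) := by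
      nlinarith [mul_le_mul_of_nonneg_left hrec' hs0.le]
    rw [div_mul_div_comm, div_le_div_iff₀ (by positivity) hc]
    nlinarith [mul_le_mul_of_nonneg_left hrs
        (by positivity : (0:ℝ) ≤ 4 * (s - t n)),
      sq_nonneg (s * (s - t (n + 1)) - 2 * (s - t n)), hs0, ha.le, hb.le, hc.le]
  have hy0 : 0 < (s - t 0) / (s - t 1) := div_pos (hpos 0) (hpos 1)
  have hr1 : 1 < 4 / s := (one_lt_div hs0).2 hs4
  have hgrow : ∀ n : ℕ,
      (4 / s) ^ n * ((s - t 0) / (s - t 1)) ≤ (s - t n) / (s - t (n + 1)) := by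
    intro n
    induction n with
    | zero => simp
    | succ k ih =>
      have hk := hystep k
      calc (4 / s) ^ (k + 1) * ((s - t 0) / (s - t 1))
          = 4 / s * ((4 / s) ^ k * ((s - t 0) / (s - t 1))) := by ring
        _ ≤ 4 / s * ((s - t k) / (s - t (k + 1))) :=
            mul_le_mul_of_nonneg_left ih (by positivity)
        _ ≤ (s - t (k + 1)) / (s - t (k + 2)) := hk
  obtain ⟨n, hn⟩ := pow_unbounded_of_one_lt (s / ((s - t 0) / (s - t 1))) hr1
  have hlt : s < (4 / s) ^ n * ((s - t 0) / (s - t 1)) := by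
    rw [div_lt_iff₀ hy0] at hn; linarith
  have h1 := hgrow n
  have h2 := hylt n
  linarith
end
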